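/- Suppose the BGK assumptions hold, that there exist λ₀ < 0 and a first eigenfunction u₀ : ℝ → ℝ which is C² with u₀(0) = u₀(P) = 0, u₀(x) > 0 for all x ∈ (0,P), and u₀''(x) + (q(x) + λ₀)u₀(x) = 0 for all x ∈ [0,P], and that condition (v) holds: ∫₀^{P/2} (q(x)+λ₀)(q(x)+(4/3)λ₀) u₀(x)⁴ dx < 0. Set ψ(x) := u₀(x)u₀'(x), and assume all integrals appearing in ℒ[ψ] converge absolutely. Then ℒ[ψ] = 2∫₀^{P/2} (q(x)+λ₀)(q(x)+(4/3)λ₀) u₀(x)⁴ dx < 0. -/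

import Mathlib

open MeasureTheory intervalIntegral

/-- Inner spatial integral over a full period for free particles of energy `e`. -/
noncomputable def freeInner (φ ψ : ℝ → ℝ) (P e : ℝ) : ℝ :=
  ∫ y in (0:ℝ)..P, ψ y / Real.sqrt (2 * (e - φ y))

/-- Period `P_f(e)` of a free particle with energy `e`. -/
noncomputable def Pfree (φ : ℝ → ℝ) (P e : ℝ) : ℝ :=
  ∫ y in (0:ℝ)..P, 1 / Real.sqrt (2 * (e - φ y))

/-- Inner spatial integral between turning points for trapped particles of energy `e`. -/
noncomputable def trapInner (φ ψ : ℝ → ℝ) (P : ℝ) (α : ℝ → ℝ) (e : ℝ) : ℝ :=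
  ∫ y in (α e)..(P - α e), ψ y / Real.sqrt (2 * (e - φ y))

/-- Period `P_t(e)` of a trapped particle with energy `e`. -/
noncomputable def Ptrap (φ : ℝ → ℝ) (P : ℝ) (α : ℝ → ℝ) (e : ℝ) : ℝ :=
  ∫ y in (α e)..(P - α e), 1 / Real.sqrt (2 * (e - φ y))

/-- Lin's instability functional `ℒ[ψ]`. -/
noncomputable def Lfunc (μ φ : ℝ → ℝ) (P : ℝ) (α : ℝ → ℝ) (ψ : ℝ → ℝ) : ℝ :=
  (∫ x in (0:ℝ)..P,
      ((deriv ψ x) ^ 2 - (∫ v : ℝ, deriv μ (v ^ 2 / 2 + φ x)) * (ψ x) ^ 2))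
  + (∫ e in Set.Ioi (φ 0), deriv μ e * (Pfree φ P e)⁻¹ * (freeInner φ ψ P e) ^ 2)
  + 2 * ∫ e in (φ (P / 2))..(φ 0),
      deriv μ e * (Ptrap φ P α e)⁻¹ * (trapInner φ ψ P α e) ^ 2

/-!
The test function `ψ = u₀u₀'` is odd about `P/2`. Indeed the coefficient `q + λ₀` is even about
`P/2` (because `φ` is), so `u₀` and its reflection `u₀(P - ·)` solve the same equation with the
same Dirichlet data; their Wronskian vanishes, and since `u₀ > 0` inside they coincide. Both
particle terms of `ℒ` integrate `ψ` against weights even about `P/2` over intervals symmetric about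
`P/2`, so they vanish. In the field term, `u₀'' = -(q + λ₀)u₀` turns `ψ'² - qψ²` into
`(q + λ₀)(q + 4λ₀/3)u₀⁴` plus the derivative of `u₀u₀'³ + (λ₀/3)u₀³u₀'`, which vanishes at both
ends; the remaining integrand is even about `P/2`.
-/

open Set

section Reflection

variable {f : ℝ → ℝ}

theorem intervalIntegral.integral_eq_zero_of_reflect_eq_neg {a c : ℝ}
    (hf : ∀ x ∈ uIcc a (c - a), f (c - x) = -f x) : ∫ x in a..c - a, f x = 0 := by
  have h := integral_comp_sub_left (a := a) (b := c - a) f c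
  rw [sub_sub_cancel, integral_congr hf, integral_neg] at h
  linarith

theorem intervalIntegral.integral_eq_two_mul_integral_half_of_reflect_eq {P : ℝ}
    (hf : IntervalIntegrable f volume 0 P) (hsymm : ∀ x ∈ uIcc 0 P, f (P - x) = f x) :
    ∫ x in 0..P, f x = 2 * ∫ x in 0..P / 2, f x := by
  have hmid : P / 2 ∈ uIcc 0 P := by
    rw [mem_uIcc]
    rcases le_total 0 P with h | h <;> [left; right] <;> constructor <;> linarith
  have hleft : uIcc 0 (P / 2) ⊆ uIcc 0 P := uIcc_subset_uIcc left_mem_uIcc hmid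
  have hright : ∫ x in P / 2..P, f x = ∫ x in 0..P / 2, f x := by
    have h := integral_comp_sub_left (a := 0) (b := P / 2) f P
    rw [sub_zero, sub_half, integral_congr fun x hx => hsymm x (hleft hx)] at h
    exact h.symm
  rw [← integral_add_adjacent_intervals (hf.mono_set hleft)
    (hf.mono_set (uIcc_subset_uIcc hmid right_mem_uIcc)), hright]
  ring

end Reflection

section ReflectedSolution

variable {u c : ℝ → ℝ} {P : ℝ}

theorem wronskian_reflect_eq_zero (hu : ContDiff ℝ 2 u) (hc : ∀ x ∈ Icc 0 P, c (P - x) = c x)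
    (hode : ∀ x ∈ Icc 0 P, deriv (deriv u) x + c x * u x = 0) (h0 : u 0 = 0) (hP : u P = 0) :
    ∀ x ∈ Icc 0 P, u x * deriv u (P - x) + deriv u x * u (P - x) = 0 := by
  have hu₁ : Differentiable ℝ u := hu.differentiable two_ne_zero
  have hu₂ : Differentiable ℝ (deriv u) := hu.differentiable_deriv_two
  have hW : ∀ x, HasDerivAt (fun x => u x * deriv u (P - x) + deriv u x * u (P - x))
      (u x * -deriv (deriv u) (P - x) + deriv (deriv u) x * u (P - x)) x := fun x => by
    refine (((hu₁ x).hasDerivAt.mul ((hu₂ _).hasDerivAt.comp_const_sub P x)).add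
      ((hu₂ x).hasDerivAt.mul ((hu₁ _).hasDerivAt.comp_const_sub P x))).congr_deriv ?_
    ring
  have hconst := constant_of_has_deriv_right_zero (a := 0) (b := P)
    (fun x _ => (hW x).continuousAt.continuousWithinAt) fun x hx => by
      have hx' := Ico_subset_Icc_self hx
      have hPx : P - x ∈ Icc 0 P := ⟨by linarith [hx'.2], by linarith [hx'.1]⟩
      refine ((hW x).congr_deriv ?_).hasDerivWithinAt
      rw [eq_neg_of_add_eq_zero_left (hode x hx'), eq_neg_of_add_eq_zero_left (hode _ hPx),
        hc x hx']
      ring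
  intro x hx
  rw [hconst x hx]
  simp [h0, hP]

theorem reflect_eqOn_of_wronskian_eq_zero (hu : Differentiable ℝ u)
    (hW : ∀ x ∈ Ioo 0 P, u x * deriv u (P - x) + deriv u x * u (P - x) = 0)
    (hne : ∀ x ∈ Ioo 0 P, u x ≠ 0) : EqOn (fun x => u (P - x)) u (Ioo 0 P) := by
  intro x hx
  have hmid : P / 2 ∈ Ioo 0 P := ⟨by linarith [hx.1, hx.2], by linarith [hx.1, hx.2]⟩
  have hratio : ∀ y ∈ Ioo 0 P, HasDerivAt (fun y => u (P - y) / u y) 0 y := fun y hy => by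
    refine (((hu _).hasDerivAt.comp_const_sub P y).div (hu y).hasDerivAt
      (hne y hy)).congr_deriv ?_
    rw [div_eq_zero_iff, or_iff_left (pow_ne_zero 2 (hne y hy))]
    linear_combination -hW y hy
  have hconst := isOpen_Ioo.is_const_of_deriv_eq_zero isPreconnected_Ioo
    (fun y hy => (hratio y hy).differentiableAt.differentiableWithinAt)
    (fun y hy => (hratio y hy).deriv) hx hmid
  rw [sub_half, div_self (hne _ hmid), div_eq_one_iff_eq (hne x hx)] at hconst
  exact hconst

theorem reflect_eq_self_of_dirichlet (hu : ContDiff ℝ 2 u) (hc : ∀ x ∈ Icc 0 P, c (P - x) = c x)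
    (hode : ∀ x ∈ Icc 0 P, deriv (deriv u) x + c x * u x = 0) (h0 : u 0 = 0) (hP : u P = 0)
    (hne : ∀ x ∈ Ioo 0 P, u x ≠ 0) : ∀ x ∈ Icc 0 P, u (P - x) = u x := by
  have hW := wronskian_reflect_eq_zero hu hc hode h0 hP
  intro x hx
  rcases eq_endpoints_or_mem_Ioo_of_mem_Icc hx with rfl | rfl | hx'
  · simp [h0, hP]
  · simp [h0, hP]
  · exact reflect_eqOn_of_wronskian_eq_zero (hu.differentiable two_ne_zero)
      (fun y hy => hW y (Ioo_subset_Icc_self hy)) hne hx'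

end ReflectedSolution

theorem deriv_reflect_eqOn_neg {u : ℝ → ℝ} {P : ℝ} {s : Set ℝ} (hs : IsOpen s)
    (h : EqOn (fun x => u (P - x)) u s) :
    EqOn (fun x => deriv u (P - x)) (fun x => -deriv u x) s := by
  intro x hx
  have hderiv := (h.eventuallyEq_of_mem (hs.mem_nhds hx)).deriv_eq
  rw [deriv_comp_const_sub] at hderiv
  simp only [← hderiv, neg_neg]

theorem mul_deriv_reflect_eq_neg {u : ℝ → ℝ} {P : ℝ} (hsymm : ∀ x ∈ Icc 0 P, u (P - x) = u x)
    (h0 : u 0 = 0) : ∀ x ∈ Icc 0 P, u (P - x) * deriv u (P - x) = -(u x * deriv u x) := by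
  intro x hx
  have hP : u P = 0 := by simpa [h0] using hsymm 0 ⟨le_rfl, hx.1.trans hx.2⟩
  rcases eq_endpoints_or_mem_Ioo_of_mem_Icc hx with rfl | rfl | hx'
  · simp [h0, hP]
  · simp [h0, hP]
  · have hderiv : deriv u (P - x) = -deriv u x :=
      deriv_reflect_eqOn_neg isOpen_Ioo (fun y hy => hsymm y (Ioo_subset_Icc_self hy)) hx'
    rw [hsymm x hx, hderiv, mul_neg]

section TestFunctionEnergy

variable {u q : ℝ → ℝ} {lam P : ℝ}

theorem integral_sq_deriv_mul_deriv_sub (hu : ContDiff ℝ 2 u) (h0 : u 0 = 0) (hP : u P = 0)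
    (hode : ∀ x ∈ uIcc 0 P, deriv (deriv u) x + (q x + lam) * u x = 0) :
    ∫ x in 0..P, ((deriv (fun y => u y * deriv u y) x) ^ 2 - q x * (u x * deriv u x) ^ 2)
      = ∫ x in 0..P,
          (deriv (deriv u) x ^ 2 * u x ^ 2 - lam / 3 * deriv (deriv u) x * u x ^ 3) := by
  have hu₁ : Differentiable ℝ u := hu.differentiable two_ne_zero
  have hu₂ : Differentiable ℝ (deriv u) := hu.differentiable_deriv_two
  have hu₃ : Continuous (deriv (deriv u)) := hu.deriv'.continuous_deriv_one
  have hu₁c : Continuous u := hu₁.continuous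
  have hu₂c : Continuous (deriv u) := hu₂.continuous
  set F' : ℝ → ℝ := fun x => deriv u x ^ 4 + 3 * u x * deriv u x ^ 2 * deriv (deriv u) x
    + lam * u x ^ 2 * deriv u x ^ 2 + lam / 3 * u x ^ 3 * deriv (deriv u) x with hF'
  set G : ℝ → ℝ := fun x =>
    deriv (deriv u) x ^ 2 * u x ^ 2 - lam / 3 * deriv (deriv u) x * u x ^ 3 with hG
  have hF : ∀ x, HasDerivAt (fun x => u x * deriv u x ^ 3 + lam / 3 * u x ^ 3 * deriv u x)
      (F' x) x := fun x => by
    refine (((hu₁ x).hasDerivAt.mul ((hu₂ x).hasDerivAt.pow 3)).add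
      ((((hu₁ x).hasDerivAt.pow 3).const_mul (lam / 3)).mul (hu₂ x).hasDerivAt)).congr_deriv ?_
    simp only [hF', Pi.pow_apply]
    push_cast
    ring
  have hF'c : Continuous F' := by fun_prop
  have hGc : Continuous G := by fun_prop
  calc _ = ∫ x in 0..P, (F' x + G x) := integral_congr fun x hx => by
          have hψ' : deriv (fun y => u y * deriv u y) x
              = deriv u x * deriv u x + u x * deriv (deriv u) x :=
            ((hu₁ x).hasDerivAt.mul (hu₂ x).hasDerivAt).deriv
          simp only [hψ', hF', hG, eq_neg_of_add_eq_zero_left (hode x hx)]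
          ring
    _ = (∫ x in 0..P, F' x) + ∫ x in 0..P, G x :=
          integral_add (hF'c.intervalIntegrable _ _) (hGc.intervalIntegrable _ _)
    _ = ∫ x in 0..P, G x := by
          rw [integral_eq_sub_of_hasDerivAt (fun x _ => hF x) (hF'c.intervalIntegrable _ _)]
          simp [h0, hP]

theorem integral_sq_deriv_mul_deriv_sub_eq_two_mul (hP₀ : 0 ≤ P) (hu : ContDiff ℝ 2 u)
    (hsymm : ∀ x ∈ Icc 0 P, u (P - x) = u x) (hq : ∀ x ∈ Icc 0 P, q (P - x) = q x)
    (hode : ∀ x ∈ Icc 0 P, deriv (deriv u) x + (q x + lam) * u x = 0)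
    (h0 : u 0 = 0) (hP : u P = 0) :
    ∫ x in 0..P, ((deriv (fun y => u y * deriv u y) x) ^ 2 - q x * (u x * deriv u x) ^ 2)
      = 2 * ∫ x in 0..P / 2, (q x + lam) * (q x + 4 / 3 * lam) * u x ^ 4 := by
  have hu₁ : Continuous u := hu.continuous
  have hu₂ : Continuous (deriv (deriv u)) := hu.deriv'.continuous_deriv_one
  rw [integral_sq_deriv_mul_deriv_sub hu h0 hP (by rwa [uIcc_of_le hP₀]),
    integral_eq_two_mul_integral_half_of_reflect_eq
      ((by fun_prop : Continuous _).intervalIntegrable _ _) ?_]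
  · congr 1
    refine integral_congr fun x hx => ?_
    rw [uIcc_of_le (by linarith)] at hx
    simp only [eq_neg_of_add_eq_zero_left (hode x ⟨hx.1, by linarith [hx.2]⟩)]
    ring
  · intro x hx
    rw [uIcc_of_le hP₀] at hx
    have hu₂symm : deriv (deriv u) (P - x) = deriv (deriv u) x := by
      rw [eq_neg_of_add_eq_zero_left (hode x hx),
        eq_neg_of_add_eq_zero_left (hode _ ⟨by linarith [hx.2], by linarith [hx.1]⟩),
        hq x hx, hsymm x hx]
    rw [hu₂symm, hsymm x hx]

end TestFunctionEnergy

theorem Lfunc_eq_integral_of_reflect_eq_neg {μ φ α ψ : ℝ → ℝ} {P : ℝ} (hP : 0 ≤ P)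
    (hφsym : ∀ x ∈ Icc 0 P, φ (P - x) = φ x) (hφ : φ (P / 2) ≤ φ 0)
    (hα : ∀ e ∈ Ioo (φ (P / 2)) (φ 0), α e ∈ Icc 0 (P / 2))
    (hψ : ∀ x ∈ Icc 0 P, ψ (P - x) = -ψ x) :
    Lfunc μ φ P α ψ
      = ∫ x in 0..P, ((deriv ψ x) ^ 2 - (∫ v : ℝ, deriv μ (v ^ 2 / 2 + φ x)) * (ψ x) ^ 2) := by
  have hinner : ∀ a e : ℝ, 0 ≤ a → a ≤ P / 2 →
      ∫ y in a..P - a, ψ y / Real.sqrt (2 * (e - φ y)) = 0 := fun a e ha₀ ha => by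
    refine integral_eq_zero_of_reflect_eq_neg fun x hx => ?_
    rw [uIcc_of_le (by linarith)] at hx
    have hx' : x ∈ Icc 0 P := ⟨by linarith [hx.1], by linarith [hx.2]⟩
    rw [hφsym x hx', hψ x hx', neg_div]
  have hfree : ∀ e, freeInner φ ψ P e = 0 := fun e => by
    simpa only [freeInner, sub_zero] using hinner 0 e le_rfl (by linarith)
  have htrap : ∫ e in φ (P / 2)..φ 0, deriv μ e * (Ptrap φ P α e)⁻¹ * trapInner φ ψ P α e ^ 2
      = 0 := by
    rw [integral_of_le hφ, integral_Ioc_eq_integral_Ioo]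
    refine setIntegral_eq_zero_of_forall_eq_zero fun e he => ?_
    rw [trapInner, hinner _ e (hα e he).1 (hα e he).2]
    ring
  simp [Lfunc, hfree, htrap]

theorem Lfunc_eval_at_test_function_general
    (μ φ : ℝ → ℝ) (P : ℝ) (hP : 0 < P)
    -- BGK assumptions
    (hφsym : ∀ x ∈ Set.Icc 0 P, φ (P - x) = φ x)
    (hφmax : ∀ x, φ x ≤ φ 0)
    -- the Sturm–Liouville potential q
    (q : ℝ → ℝ) (hq : ∀ x, q x = ∫ v : ℝ, deriv μ (v ^ 2 / 2 + φ x))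
    -- the turning-point function α
    (α : ℝ → ℝ)
    (hα : ∀ e ∈ Set.Ioo (φ (P / 2)) (φ 0), α e ∈ Set.Icc 0 (P / 2) ∧ φ (α e) = e)
    -- first eigenvalue and eigenfunction
    (lam₀ : ℝ)
    (u₀ : ℝ → ℝ) (hu₀C2 : ContDiff ℝ 2 u₀)
    (hu₀0 : u₀ 0 = 0) (hu₀P : u₀ P = 0)
    (hu₀pos : ∀ x ∈ Set.Ioo 0 P, 0 < u₀ x)
    (hode : ∀ x ∈ Set.Icc 0 P, deriv (deriv u₀) x + (q x + lam₀) * u₀ x = 0)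
    -- condition (v)
    (hcond : (∫ x in (0:ℝ)..(P / 2),
        (q x + lam₀) * (q x + (4 / 3) * lam₀) * (u₀ x) ^ 4) < 0)
    -- the test function ψ = u₀ u₀'
    (ψ : ℝ → ℝ) (hψ : ψ = fun x => u₀ x * deriv u₀ x) :
    Lfunc μ φ P α ψ
      = 2 * ∫ x in (0:ℝ)..(P / 2),
          (q x + lam₀) * (q x + (4 / 3) * lam₀) * (u₀ x) ^ 4 ∧
    Lfunc μ φ P α ψ < 0 := by
  subst hψ
  have hqsym : ∀ x ∈ Icc 0 P, q (P - x) = q x := fun x hx => by rw [hq, hq, hφsym x hx]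
  have hu₀sym : ∀ x ∈ Icc 0 P, u₀ (P - x) = u₀ x :=
    reflect_eq_self_of_dirichlet (c := fun x => q x + lam₀) hu₀C2
      (fun x hx => by rw [hqsym x hx]) hode hu₀0 hu₀P fun x hx => (hu₀pos x hx).ne'
  have hL : Lfunc μ φ P α (fun x => u₀ x * deriv u₀ x)
      = 2 * ∫ x in 0..P / 2, (q x + lam₀) * (q x + 4 / 3 * lam₀) * u₀ x ^ 4 := by
    rw [Lfunc_eq_integral_of_reflect_eq_neg hP.le hφsym (hφmax _) (fun e he => (hα e he).1)
      (mul_deriv_reflect_eq_neg hu₀sym hu₀0)]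
    simp only [← hq]
    exact integral_sq_deriv_mul_deriv_sub_eq_two_mul hP.le hu₀C2 hu₀sym hqsym hode hu₀0 hu₀P
  exact ⟨hL, by linarith⟩

/-- **Evaluation of the instability functional at the test function `ψ = u₀u₀'`.**
Under the BGK assumptions, with `u₀` the first Dirichlet eigenfunction (eigenvalue
`λ₀ < 0`) of `u'' + (q+λ)u = 0` on `(0,P)`, and assuming condition (v), the test function
`ψ = u₀u₀'` satisfies `ℒ[ψ] = 2∫₀^{P/2} (q+λ₀)(q+(4/3)λ₀)u₀⁴ dx < 0`. -/
theorem Lfunc_eval_at_test_function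
    (μ φ : ℝ → ℝ) (P : ℝ) (hP : 0 < P)
    -- BGK assumptions
    (hμC1 : ContDiff ℝ 1 μ) (hμnonneg : ∀ y, 0 ≤ μ y)
    (hdecay : ∃ C > (0:ℝ), ∃ γ > (1:ℝ), ∀ y, |deriv μ y| ≤ C / (1 + |y| ^ γ))
    (hφC2 : ContDiff ℝ 2 φ)
    (hφper : ∀ x, φ (x + P) = φ x)
    (hφsym : ∀ x ∈ Set.Icc 0 P, φ (P - x) = φ x)
    (hφanti : StrictAntiOn φ (Set.Icc 0 (P / 2)))
    (hφmax : ∀ x, φ x ≤ φ 0)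
    (hφmin : ∀ x, φ (P / 2) ≤ φ x)
    (hμint : ∀ x, Integrable (fun v : ℝ => μ (v ^ 2 / 2 + φ x)))
    (hpoisson : ∀ x, deriv (deriv φ) x = 1 - ∫ v : ℝ, μ (v ^ 2 / 2 + φ x))
    -- the Sturm–Liouville potential q
    (q : ℝ → ℝ) (hq : ∀ x, q x = ∫ v : ℝ, deriv μ (v ^ 2 / 2 + φ x))
    -- the turning-point function α
    (α : ℝ → ℝ)
    (hα : ∀ e ∈ Set.Ioo (φ (P / 2)) (φ 0), α e ∈ Set.Icc 0 (P / 2) ∧ φ (α e) = e)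
    -- first eigenvalue and eigenfunction
    (lam₀ : ℝ) (hlam₀ : lam₀ < 0)
    (u₀ : ℝ → ℝ) (hu₀C2 : ContDiff ℝ 2 u₀)
    (hu₀0 : u₀ 0 = 0) (hu₀P : u₀ P = 0)
    (hu₀pos : ∀ x ∈ Set.Ioo 0 P, 0 < u₀ x)
    (hode : ∀ x ∈ Set.Icc 0 P, deriv (deriv u₀) x + (q x + lam₀) * u₀ x = 0)
    -- condition (v)
    (hcond : (∫ x in (0:ℝ)..(P / 2),
        (q x + lam₀) * (q x + (4 / 3) * lam₀) * (u₀ x) ^ 4) < 0)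
    -- the test function ψ = u₀ u₀'
    (ψ : ℝ → ℝ) (hψ : ψ = fun x => u₀ x * deriv u₀ x)
    -- absolute convergence of all integrals appearing in ℒ[ψ]
    (hI1 : IntervalIntegrable
      (fun x => (deriv ψ x) ^ 2 - (∫ v : ℝ, deriv μ (v ^ 2 / 2 + φ x)) * (ψ x) ^ 2)
      volume 0 P)
    (hI2 : IntegrableOn
      (fun e => deriv μ e * (Pfree φ P e)⁻¹ * (freeInner φ ψ P e) ^ 2) (Set.Ioi (φ 0)))
    (hI3 : IntervalIntegrable
      (fun e => deriv μ e * (Ptrap φ P α e)⁻¹ * (trapInner φ ψ P α e) ^ 2)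
      volume (φ (P / 2)) (φ 0))
    (hI4 : ∀ e, φ 0 < e →
      IntervalIntegrable (fun y => ψ y / Real.sqrt (2 * (e - φ y))) volume 0 P ∧
      IntervalIntegrable (fun y => 1 / Real.sqrt (2 * (e - φ y))) volume 0 P)
    (hI5 : ∀ e ∈ Set.Ioo (φ (P / 2)) (φ 0),
      IntervalIntegrable (fun y => ψ y / Real.sqrt (2 * (e - φ y)))
        volume (α e) (P - α e) ∧
      IntervalIntegrable (fun y => 1 / Real.sqrt (2 * (e - φ y)))
        volume (α e) (P - α e)) :
    Lfunc μ φ P α ψ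
      = 2 * ∫ x in (0:ℝ)..(P / 2),
          (q x + lam₀) * (q x + (4 / 3) * lam₀) * (u₀ x) ^ 4 ∧
    Lfunc μ φ P α ψ < 0 :=
  Lfunc_eval_at_test_function_general μ φ P hP hφsym hφmax q hq α hα lam₀ u₀ hu₀C2 hu₀0 hu₀P hu₀pos
    hode hcond ψ hψ
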